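/- Under a completely randomized assignment, for any real coefficients c_1,…,c_J, the variance of the linear combination Σ_{j=1}^J c_j p_j equals Σ_{j=1}^J c_j² ((N − N_j)/N)(S_j²/N_j) − (1/N) Σ_{1 ≤ j < j' ≤ J} c_j c_{j'} (S_j² + S_{j'}² − S²_{j−j'}). -/

import Mathlib

/-!
Centre the outcomes: on every assignment, `p_j - P_j = (1/N_j) Σ_{T i = j} (Y_i(j) - P_j)`.
The law of `T` is invariant under permuting the units, so `T i = j` with probability `N_j/N`,
and for `i ≠ i'` the pair `(T i, T i') = (j, j')` has probability
`N_j (N_{j'} - δ_{jj'}) / (N (N-1))`. For centred outcomes this yields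
`Cov(p_j, p_{j'}) = (δ_{jj'}/N_j - 1/N) S_{jj'}`, with `S_{jj'}` the population covariance;
the variance of `Σ c_j p_j` follows by bilinearity and `2 S_{jj'} = S_j² + S_{j'}² - S²_{j-j'}`.
-/

open Finset

/-- The finset of completely randomized assignments of `N` units to treatments in `J`
with group sizes `Nj`. -/
def assignments (N : ℕ) {J : Type*} [Fintype J] [DecidableEq J] (Nj : J → ℕ) :
    Finset (Fin N → J) :=
  Finset.univ.filter fun T => ∀ j, (Finset.univ.filter fun i => T i = j).card = Nj j

/-- Expectation with respect to the uniform distribution on completely randomized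
assignments. -/
noncomputable def expect {N : ℕ} {J : Type*} [Fintype J] [DecidableEq J]
    (Nj : J → ℕ) (f : (Fin N → J) → ℝ) : ℝ :=
  (∑ T ∈ assignments N Nj, f T) / ((assignments N Nj).card : ℝ)

/-- Variance with respect to the randomization distribution. -/
noncomputable def rvar {N : ℕ} {J : Type*} [Fintype J] [DecidableEq J]
    (Nj : J → ℕ) (f : (Fin N → J) → ℝ) : ℝ :=
  expect Nj fun T => (f T - expect Nj f) ^ 2

/-- Covariance with respect to the randomization distribution. -/
noncomputable def rcov {N : ℕ} {J : Type*} [Fintype J] [DecidableEq J]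
    (Nj : J → ℕ) (f g : (Fin N → J) → ℝ) : ℝ :=
  expect Nj fun T => (f T - expect Nj f) * (g T - expect Nj g)

/-- Observed group mean `p_j` of treatment `j` under assignment `T`. -/
noncomputable def pObs {N : ℕ} {J : Type*} [DecidableEq J]
    (Y : Fin N → J → ℝ) (Nj : J → ℕ) (j : J) (T : Fin N → J) : ℝ :=
  (∑ i ∈ Finset.univ.filter fun i => T i = j, Y i j) / (Nj j : ℝ)

/-- Population mean `P_j`. -/
noncomputable def Pmean {N : ℕ} {J : Type*} (Y : Fin N → J → ℝ) (j : J) : ℝ :=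
  (∑ i, Y i j) / (N : ℝ)

/-- Population variance `S_j²`. -/
noncomputable def S2 {N : ℕ} {J : Type*} (Y : Fin N → J → ℝ) (j : J) : ℝ :=
  (∑ i, (Y i j - Pmean Y j) ^ 2) / ((N : ℝ) - 1)

/-- Variance of unit-level differences `S²_{j-j'}`. -/
noncomputable def S2diff {N : ℕ} {J : Type*} (Y : Fin N → J → ℝ) (j j' : J) : ℝ :=
  (∑ i, (Y i j - Y i j' - (Pmean Y j - Pmean Y j')) ^ 2) / ((N : ℝ) - 1)

open scoped BigOperators

noncomputable def Scov {N : ℕ} {J : Type*} (Y : Fin N → J → ℝ) (j j' : J) : ℝ :=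
  (∑ i, (Y i j - Pmean Y j) * (Y i j' - Pmean Y j')) / ((N : ℝ) - 1)

lemma Scov_self {N : ℕ} {J : Type*} (Y : Fin N → J → ℝ) (j : J) : Scov Y j j = S2 Y j := by
  simp only [Scov, S2, sq]

lemma two_mul_Scov {N : ℕ} {J : Type*} (Y : Fin N → J → ℝ) (j j' : J) :
    2 * Scov Y j j' = S2 Y j + S2 Y j' - S2diff Y j j' := by
  simp only [Scov, S2, S2diff, ← add_div, ← sub_div, mul_div_assoc', mul_sum, ← sum_add_distrib,
    ← sum_sub_distrib]
  congr 1
  exact sum_congr rfl fun i _ => by ring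

lemma sum_sub_Pmean {N : ℕ} {J : Type*} (hN : N ≠ 0) (Y : Fin N → J → ℝ) (j : J) :
    ∑ i, (Y i j - Pmean Y j) = 0 := by
  rw [sum_sub_distrib, sum_const, card_univ, Fintype.card_fin, nsmul_eq_mul, Pmean,
    mul_div_cancel₀ _ (Nat.cast_ne_zero.mpr hN), sub_self]

lemma sum_sum_mul_ite_eq {ι : Type*} [Fintype ι] [DecidableEq ι] (x y : ι → ℝ) (a b : ℝ) :
    ∑ i, ∑ i', x i * y i' * (if i = i' then a else b)
      = (a - b) * ∑ i, x i * y i + b * (∑ i, x i) * ∑ i, y i := by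
  have h_split : ∀ i i', x i * y i' * (if i = i' then a else b)
      = (if i = i' then (a - b) * (x i * y i') else 0) + b * (x i * y i') := by
    intro i i'
    split_ifs <;> ring
  simp only [h_split, sum_add_distrib, sum_ite_eq, mem_univ, if_true, ← mul_sum, mul_assoc,
    sum_mul_sum]

lemma sum_sum_eq_sum_add_two_mul_sum_lt {ι : Type*} [Fintype ι] [LinearOrder ι]
    (F : ι → ι → ℝ) (hF : ∀ i j, F i j = F j i) :
    ∑ i, ∑ j, F i j = ∑ i, F i i + 2 * ∑ i, ∑ j ∈ univ.filter (fun j => i < j), F i j := by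
  have h_trichotomy : ∀ i j, F i j = (if i = j then F i j else 0)
      + ((if i < j then F i j else 0) + (if j < i then F i j else 0)) := by
    intro i j
    rcases lt_trichotomy i j with h | rfl | h
    · simp [h, h.ne, h.not_gt]
    · simp
    · simp [h, h.ne', h.not_gt]
  have h_lower : ∑ i, ∑ j ∈ univ.filter (fun j => j < i), F i j
      = ∑ i, ∑ j ∈ univ.filter (fun j => i < j), F i j := by
    rw [sum_comm' (t' := univ) (s' := fun j => univ.filter fun i => j < i) (by simp)]
    exact sum_congr rfl fun i _ => sum_congr rfl fun j _ => hF j i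
  rw [sum_congr rfl fun i _ => sum_congr rfl fun j _ => h_trichotomy i j]
  simp only [sum_add_distrib, sum_ite_eq, mem_univ, if_true, ← sum_filter, h_lower]
  ring

section CompleteRandomization

variable {N : ℕ} {J : Type*} [Fintype J] [DecidableEq J] {Nj : J → ℕ}

lemma mem_assignments {T : Fin N → J} :
    T ∈ assignments N Nj ↔ ∀ j, (univ.filter fun i => T i = j).card = Nj j := by
  simp [assignments]

lemma comp_perm_mem_assignments {T : Fin N → J} (σ : Equiv.Perm (Fin N))
    (hT : T ∈ assignments N Nj) : T ∘ σ ∈ assignments N Nj := by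
  rw [mem_assignments] at hT ⊢
  intro j
  rw [← hT j]
  exact card_bij (fun i _ => σ i) (by simp) (fun _ _ _ _ h => σ.injective h)
    (fun i hi => ⟨σ.symm i, by simpa using hi, by simp⟩)

lemma sum_assignments_comp_perm (σ : Equiv.Perm (Fin N)) (f : (Fin N → J) → ℝ) :
    ∑ T ∈ assignments N Nj, f (T ∘ σ) = ∑ T ∈ assignments N Nj, f T :=
  sum_nbij' (· ∘ σ) (· ∘ σ.symm) (fun _ hT => comp_perm_mem_assignments σ hT)
    (fun _ hT => comp_perm_mem_assignments σ.symm hT) (fun T _ => by ext; simp)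
    (fun T _ => by ext; simp) (fun _ _ => rfl)

lemma assignments_nonempty (hsum : ∑ j, Nj j = N) : (assignments N Nj).Nonempty := by
  let e : (Σ j, Fin (Nj j)) ≃ Fin N := Fintype.equivFinOfCardEq (by simp [hsum])
  refine ⟨fun i => (e.symm i).1, mem_assignments.mpr fun j => ?_⟩
  calc (univ.filter fun i => (e.symm i).1 = j).card
      = (univ.filter fun s : Σ j, Fin (Nj j) => s.1 = j).card :=
        card_bij (fun i _ => e.symm i) (by simp) (fun _ _ _ _ h => e.symm.injective h)
          (fun s hs => ⟨e s, by simpa using hs, by simp⟩)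
    _ = Nj j := by
      rw [card_filter, ← univ_sigma_univ, sum_sigma]
      simp [apply_ite, sum_ite_eq']

lemma sum_apply_of_mem_assignments {T : Fin N → J} (hT : T ∈ assignments N Nj)
    (g : J → ℝ) : ∑ k, g (T k) = ∑ j, (Nj j : ℝ) * g j := by
  rw [← sum_fiberwise' univ T g]
  refine sum_congr rfl fun j _ => ?_
  rw [sum_const, mem_assignments.mp hT j, nsmul_eq_mul]

lemma natCast_mul_sum_assignments_apply (i : Fin N) (g : J → ℝ) :
    (N : ℝ) * ∑ T ∈ assignments N Nj, g (T i)
      = (assignments N Nj).card * ∑ j, (Nj j : ℝ) * g j := by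
  have h_indep : ∀ k, ∑ T ∈ assignments N Nj, g (T k) = ∑ T ∈ assignments N Nj, g (T i) :=
    fun k => by simpa using sum_assignments_comp_perm (Nj := Nj) (Equiv.swap k i) (g <| · i)
  calc (N : ℝ) * ∑ T ∈ assignments N Nj, g (T i)
      = ∑ k, ∑ T ∈ assignments N Nj, g (T k) := by simp [h_indep]
    _ = ∑ T ∈ assignments N Nj, ∑ j, (Nj j : ℝ) * g j := by
      rw [sum_comm]
      exact sum_congr rfl fun T hT => sum_apply_of_mem_assignments hT g
    _ = _ := by rw [sum_const, nsmul_eq_mul]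

lemma natCast_sub_one_mul_sum_assignments_apply_apply {i i' : Fin N} (hi : i ≠ i')
    (g : J → J → ℝ) :
    ((N : ℝ) - 1) * ∑ T ∈ assignments N Nj, g (T i) (T i')
      = ∑ T ∈ assignments N Nj, (∑ j, (Nj j : ℝ) * g (T i) j - g (T i) (T i)) := by
  have h_indep : ∀ k ∈ univ.erase i,
      ∑ T ∈ assignments N Nj, g (T i) (T k) = ∑ T ∈ assignments N Nj, g (T i) (T i') := by
    intro k hk
    simpa [Equiv.swap_apply_of_ne_of_ne hi (ne_of_mem_erase hk).symm] using
      sum_assignments_comp_perm (Nj := Nj) (Equiv.swap i' k) (fun T => g (T i) (T i'))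
  calc ((N : ℝ) - 1) * ∑ T ∈ assignments N Nj, g (T i) (T i')
      = ∑ k ∈ univ.erase i, ∑ T ∈ assignments N Nj, g (T i) (T k) := by
        rw [sum_congr rfl h_indep, sum_const, card_erase_of_mem (mem_univ i), card_univ,
          Fintype.card_fin, nsmul_eq_mul, Nat.cast_pred i.pos]
    _ = ∑ T ∈ assignments N Nj, (∑ k, g (T i) (T k) - g (T i) (T i)) := by
      rw [sum_comm]
      exact sum_congr rfl fun T _ => sum_erase_eq_sub (mem_univ i)
    _ = _ := sum_congr rfl fun T hT => by rw [sum_apply_of_mem_assignments hT]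

lemma expect_eq_finsetExpect (f : (Fin N → J) → ℝ) :
    expect Nj f = 𝔼 T ∈ assignments N Nj, f T :=
  (Finset.expect_eq_sum_div_card _ _).symm

lemma expect_sum {ι : Type*} (s : Finset ι) (f : ι → (Fin N → J) → ℝ) :
    expect Nj (fun T => ∑ k ∈ s, f k T) = ∑ k ∈ s, expect Nj (f k) := by
  simp only [expect_eq_finsetExpect, Finset.expect_sum_comm]

lemma expect_const_mul (a : ℝ) (f : (Fin N → J) → ℝ) :
    expect Nj (fun T => a * f T) = a * expect Nj f := by
  simp only [expect_eq_finsetExpect, Finset.mul_expect]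

lemma expect_congr_on_assignments {f g : (Fin N → J) → ℝ}
    (h : ∀ T ∈ assignments N Nj, f T = g T) : expect Nj f = expect Nj g := by
  simp only [expect_eq_finsetExpect, Finset.expect_congr rfl h]

lemma rcov_comm (f g : (Fin N → J) → ℝ) : rcov Nj f g = rcov Nj g f := by
  simp only [rcov, mul_comm]

lemma rvar_sum_mul {ι : Type*} (s : Finset ι) (c : ι → ℝ) (f : ι → (Fin N → J) → ℝ) :
    rvar Nj (fun T => ∑ k ∈ s, c k * f k T)
      = ∑ k ∈ s, ∑ k' ∈ s, c k * c k' * rcov Nj (f k) (f k') := by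
  simp only [rvar, rcov, expect_sum, expect_const_mul, ← sum_sub_distrib, ← mul_sub, sq,
    sum_mul_sum]
  refine sum_congr rfl fun k _ => sum_congr rfl fun k' _ => ?_
  rw [← expect_const_mul]
  exact expect_congr_on_assignments fun T _ => by ring

lemma expect_apply (hsum : ∑ j, Nj j = N) (i : Fin N) (g : J → ℝ) :
    expect Nj (fun T => g (T i)) = ∑ j, (Nj j : ℝ) / N * g j := by
  have hA : ((assignments N Nj).card : ℝ) ≠ 0 := by
    exact_mod_cast (assignments_nonempty hsum).card_pos.ne'
  have hN : (N : ℝ) ≠ 0 := by exact_mod_cast i.pos.ne'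
  rw [_root_.expect, div_eq_iff hA, ← mul_right_inj' hN, natCast_mul_sum_assignments_apply]
  simp only [mul_sum, sum_mul]
  exact sum_congr rfl fun j _ => by field_simp

lemma expect_apply_apply (hsum : ∑ j, Nj j = N) {i i' : Fin N} (hi : i ≠ i')
    (g : J → J → ℝ) :
    expect Nj (fun T => g (T i) (T i'))
      = ∑ j, ∑ j', (Nj j : ℝ) / N * (((Nj j' : ℝ) - if j = j' then 1 else 0) / (N - 1))
          * g j j' := by
  have hN1 : (N : ℝ) - 1 ≠ 0 := by
    have : 1 < N := Fintype.one_lt_card_iff.mpr ⟨i, i', hi⟩ |>.trans_eq (Fintype.card_fin N)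
    exact sub_ne_zero.mpr (by exact_mod_cast this.ne')
  have h_cond : ((N : ℝ) - 1) * expect Nj (fun T => g (T i) (T i'))
      = expect Nj (fun T => ∑ j', (Nj j' : ℝ) * g (T i) j' - g (T i) (T i)) := by
    rw [_root_.expect, _root_.expect, ← mul_div_assoc,
      natCast_sub_one_mul_sum_assignments_apply_apply hi]
  rw [← mul_right_inj' hN1, h_cond,
    expect_apply hsum i (fun a => ∑ j', (Nj j' : ℝ) * g a j' - g a a), mul_sum]
  refine sum_congr rfl fun j _ => Eq.symm ?_
  calc ((N : ℝ) - 1)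
        * ∑ j', (Nj j : ℝ) / N * (((Nj j' : ℝ) - if j = j' then 1 else 0) / (N - 1)) * g j j'
      = ∑ j', (Nj j : ℝ) / N * ((Nj j' : ℝ) * g j j' - if j = j' then g j j' else 0) := by
        rw [mul_sum]
        refine sum_congr rfl fun j' _ => ?_
        split_ifs with h
        · subst h
          field_simp
        · field_simp
          ring
    _ = _ := by rw [← mul_sum, sum_sub_distrib, sum_ite_eq, if_pos (mem_univ j)]

lemma expect_sum_filter (hsum : ∑ j, Nj j = N) (x : Fin N → ℝ) (j : J) :
    expect Nj (fun T => ∑ i ∈ univ.filter (fun i => T i = j), x i)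
      = (Nj j : ℝ) / N * ∑ i, x i := by
  simp only [sum_filter, expect_sum, mul_sum]
  refine sum_congr rfl fun i _ => ?_
  rw [expect_apply hsum i (fun a => if a = j then x i else 0)]
  simp [mul_ite, sum_ite_eq']

lemma expect_ite_mul_ite (hsum : ∑ j, Nj j = N) (i i' : Fin N) (j j' : J) (a b : ℝ) :
    expect Nj (fun T => (if T i = j then a else 0) * (if T i' = j' then b else 0))
      = a * b * if i = i' then (if j = j' then (Nj j : ℝ) / N else 0)
          else (Nj j : ℝ) / N * (((Nj j' : ℝ) - if j = j' then 1 else 0) / (N - 1)) := by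
  by_cases hi : i = i'
  · subst hi
    rw [if_pos rfl,
      expect_apply hsum i (fun c => (if c = j then a else 0) * (if c = j' then b else 0))]
    rcases eq_or_ne j j' with rfl | hj
    · simp only [mul_ite, ite_mul, zero_mul, mul_zero, sum_ite_eq', mem_univ, ↓reduceIte]
      ring
    · simp [hj, hj.symm, mul_ite, ite_mul, sum_ite_eq']
  · rw [if_neg hi, expect_apply_apply hsum hi
      (fun c d => (if c = j then a else 0) * (if d = j' then b else 0))]
    simp only [mul_ite, ite_mul, zero_mul, mul_zero, sum_ite_eq', mem_univ, ↓reduceIte]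
    ring

lemma expect_sum_filter_mul_sum_filter (hN : 2 ≤ N) (hsum : ∑ j, Nj j = N)
    {x y : Fin N → ℝ} (hx : ∑ i, x i = 0) (hy : ∑ i, y i = 0) (j j' : J) :
    expect Nj (fun T => (∑ i ∈ univ.filter (fun i => T i = j), x i)
        * ∑ i ∈ univ.filter (fun i => T i = j'), y i)
      = Nj j * ((if j = j' then (N : ℝ) else 0) - Nj j') / (N * (N - 1)) * ∑ i, x i * y i := by
  have hN' : (2 : ℝ) ≤ N := by exact_mod_cast hN
  have hN0 : (N : ℝ) ≠ 0 := by positivity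
  have hN1 : (N : ℝ) - 1 ≠ 0 := by linarith
  simp only [sum_filter, sum_mul_sum, expect_sum, expect_ite_mul_ite hsum, sum_sum_mul_ite_eq, hx,
    hy]
  by_cases hj : j = j'
  · subst hj
    simp only [if_true]
    field_simp
    ring
  · simp only [if_neg hj]
    field_simp
    ring

lemma pObs_sub_Pmean {Y : Fin N → J → ℝ} {T : Fin N → J} (hT : T ∈ assignments N Nj) {j : J}
    (hj : Nj j ≠ 0) :
    pObs Y Nj j T - Pmean Y j
      = (∑ i ∈ univ.filter (fun i => T i = j), (Y i j - Pmean Y j)) / Nj j := by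
  rw [sum_sub_distrib, sum_const, mem_assignments.mp hT j, nsmul_eq_mul, pObs]
  field_simp

lemma expect_pObs (hsum : ∑ j, Nj j = N) (Y : Fin N → J → ℝ) {j : J} (hj : Nj j ≠ 0) :
    expect Nj (pObs Y Nj j) = Pmean Y j := by
  unfold pObs
  simp only [div_eq_inv_mul, expect_const_mul, expect_sum_filter hsum, Pmean]
  field_simp

lemma rcov_pObs (hN : 2 ≤ N) (hsum : ∑ j, Nj j = N) (Y : Fin N → J → ℝ) {j j' : J}
    (hj : Nj j ≠ 0) (hj' : Nj j' ≠ 0) :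
    rcov Nj (pObs Y Nj j) (pObs Y Nj j')
      = ((if j = j' then (Nj j : ℝ)⁻¹ else 0) - (N : ℝ)⁻¹) * Scov Y j j' := by
  have hN0 : N ≠ 0 := by omega
  have hN1 : (N : ℝ) - 1 ≠ 0 := by
    have : (2 : ℝ) ≤ N := by exact_mod_cast hN
    linarith
  rw [rcov, expect_pObs hsum Y hj, expect_pObs hsum Y hj',
    expect_congr_on_assignments fun T hT => by
      rw [pObs_sub_Pmean hT hj, pObs_sub_Pmean hT hj', div_mul_div_comm, div_eq_inv_mul],
    expect_const_mul, expect_sum_filter_mul_sum_filter hN hsum (sum_sub_Pmean hN0 Y j)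
      (sum_sub_Pmean hN0 Y j'), Scov]
  rcases eq_or_ne j j' with rfl | hjj
  · simp only [if_true]
    field_simp
  · simp only [if_neg hjj]
    field_simp
    ring

end CompleteRandomization

/-- Under a completely randomized assignment, the variance of a linear combination
`Σ_j c_j p_j` equals
`Σ_j c_j² ((N-N_j)/N)(S_j²/N_j) - (1/N) Σ_{j<j'} c_j c_{j'} (S_j² + S_{j'}² - S²_{j-j'})`. -/
theorem rvar_linear_combination {N J : ℕ} (hN : 2 ≤ N)
    (Y : Fin N → Fin J → ℝ) (Nj : Fin J → ℕ)
    (hpos : ∀ j, 1 ≤ Nj j) (hsum : ∑ j, Nj j = N) (c : Fin J → ℝ) :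
    rvar Nj (fun T => ∑ j, c j * pObs Y Nj j T) =
      (∑ j, (c j) ^ 2 * (((N : ℝ) - (Nj j : ℝ)) / (N : ℝ)) * (S2 Y j / (Nj j : ℝ)))
        - (1 / (N : ℝ)) * ∑ j, ∑ j' ∈ Finset.univ.filter (fun j' => j < j'),
            c j * c j' * (S2 Y j + S2 Y j' - S2diff Y j j') := by
  have hNj : ∀ j, Nj j ≠ 0 := fun j => Nat.one_le_iff_ne_zero.mp (hpos j)
  rw [rvar_sum_mul, sum_sum_eq_sum_add_two_mul_sum_lt _ fun j j' => by rw [rcov_comm]; ring,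
    sub_eq_add_neg, ← neg_mul]
  congr 1
  · refine sum_congr rfl fun j _ => ?_
    have hj : (Nj j : ℝ) ≠ 0 := Nat.cast_ne_zero.mpr (hNj j)
    rw [rcov_pObs hN hsum Y (hNj j) (hNj j), if_pos rfl, Scov_self]
    field_simp
  · simp only [mul_sum]
    refine sum_congr rfl fun j _ => sum_congr rfl fun j' hj' => ?_
    rw [rcov_pObs hN hsum Y (hNj j) (hNj j'), if_neg (mem_filter.mp hj').2.ne, ← two_mul_Scov]
    ring
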